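/- Let f = P/Q be a nonzero rational function in k(x,y) with P, Q in k[x,y], Q ≠ 0, deg_x(P) ≤ d_x, deg_x(Q) ≤ d_x, deg_y(P) ≤ d_y, deg_y(Q) ≤ d_y. Set ν = 6·(d_x+1)·(d_y+1). Then there exists a family (c_{i,j,ℓ}) of elements of k, indexed by triples (i,j,ℓ) of natural numbers with i + j + ℓ ≤ ν and not all zero, such that Σ_{i+j+ℓ ≤ ν} c_{i,j,ℓ}·x^i·D_x^j(D_y^ℓ(f)) = 0 in k(x,y). -/

import Mathlib

open Polynomial

noncomputable section

/-- A map is a derivation: it is additive and satisfies the Leibniz rule. -/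
def IsDeriv {F : Type*} [CommRing F] (D : F → F) : Prop :=
  (∀ a b, D (a + b) = D a + D b) ∧ ∀ a b, D (a * b) = a * D b + b * D a

/-- Degree in `x` of an element of `k[x][y]` (inner variable `x`, outer variable `y`). -/
def degX {k : Type*} [Field k] (Q : Polynomial (Polynomial k)) : ℕ :=
  Q.support.sup fun i => (Q.coeff i).natDegree

/-- Partial derivative with respect to `x` on `k[x][y]`. -/
def derivX {k : Type*} [Field k] (Q : Polynomial (Polynomial k)) : Polynomial (Polynomial k) :=
  Q.sum fun i a => Polynomial.C (Polynomial.derivative a) * Polynomial.X ^ i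

/-- The embedding `k[x][y] → k(x)(y)`. -/
def toF {k : Type*} [Field k] : Polynomial (Polynomial k) →+* RatFunc (RatFunc k) :=
  (algebraMap (Polynomial (RatFunc k)) (RatFunc (RatFunc k))).comp
    (Polynomial.mapRingHom (algebraMap (Polynomial k) (RatFunc k)))

/-- The embedding `k(x) → k(x)(y)`. -/
def ratToF {k : Type*} [Field k] : RatFunc k →+* RatFunc (RatFunc k) :=
  (algebraMap (Polynomial (RatFunc k)) (RatFunc (RatFunc k))).comp
    (Polynomial.C : RatFunc k →+* Polynomial (RatFunc k))

/-- The embedding `k(x)[y] → k(x)(y)`. -/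
def kyToF {k : Type*} [Field k] : Polynomial (RatFunc k) →+* RatFunc (RatFunc k) :=
  algebraMap (Polynomial (RatFunc k)) (RatFunc (RatFunc k))

/-- The embedding `k[x][y] → k(x)[y]`. -/
def toKy {k : Type*} [Field k] : Polynomial (Polynomial k) →+* Polynomial (RatFunc k) :=
  Polynomial.mapRingHom (algebraMap (Polynomial k) (RatFunc k))

/-- The embedding `k[y] → k[x][y]` (a polynomial in `y` viewed in `k[x][y]`). -/
def yToXY {k : Type*} [Field k] : Polynomial k →+* Polynomial (Polynomial k) :=
  Polynomial.mapRingHom (Polynomial.C : k →+* Polynomial k)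

/-- The Hermite matrix associated with a factorisation `Q = Qs * Qneg`, with respect to the
monomial bases: its columns are the coefficient vectors (in `y`, coefficients in `k[x]`) of
`Qs * D_y(y^j) - E * y^j` for `j < dm` (where `E = Qs * D_y(Qneg) / Qneg`) and of
`Qneg * y^j` for `j < dy - dm`. -/
def hermiteMat {k : Type*} [Field k] (Qs Qneg E : Polynomial (Polynomial k)) (dy dm : ℕ) :
    Matrix (Fin dy) (Fin dy) (Polynomial k) :=
  Matrix.of fun i j =>
    if (j : ℕ) < dm then
      (Qs * Polynomial.derivative (Polynomial.X ^ (j : ℕ)) - E * Polynomial.X ^ (j : ℕ)).coeff i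
    else
      (Qneg * Polynomial.X ^ ((j : ℕ) - dm)).coeff i

/-! Each application of `D_x` or `D_y` to `A / Q ^ n` gives a quotient `A' / Q ^ (n + 1)` whose
numerator has bidegree larger by at most `(d_x, d_y)`. Hence every `x^i D_x^j D_y^ℓ f` with
`i + j + ℓ ≤ ν` is `B / Q ^ (ν + 1)` with `B` of bidegree at most `(ν + (ν + 1) d_x, (ν + 1) d_y)`,
so all of them lie in a `k`-space of dimension `(ν + (ν + 1) d_x + 1) ((ν + 1) d_y + 1)`. For
`ν = 6 (d_x + 1) (d_y + 1)` this is less than the number `C(ν + 3, 3)` of triples, which forces a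
nontrivial linear relation. -/

theorem exists_nontrivial_relation_of_mem_span {K V ι κ : Type*} [Field K] [AddCommGroup V]
    [Module K V] [Fintype κ] {s : Finset ι} {v : ι → V} {b : κ → V}
    (hv : ∀ i ∈ s, v i ∈ Submodule.span K (Set.range b)) (hcard : Fintype.card κ < s.card) :
    ∃ c : ι → K, ∑ i ∈ s, c i • v i = 0 ∧ ∃ i ∈ s, c i ≠ 0 := by
  refine not_linearIndepOn_finset_iff.mp fun hli => hcard.not_ge ?_
  have := FiniteDimensional.span_of_finite K (Set.finite_range b)
  calc s.card = Fintype.card s := (Fintype.card_coe s).symm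
    _ ≤ Module.finrank K (Submodule.span K (Set.range fun i : s => v i)) :=
      linearIndependent_iff_card_le_finrank_span.mp hli
    _ ≤ Module.finrank K (Submodule.span K (Set.range b)) := Submodule.finrank_mono
      (Submodule.span_le.mpr (Set.range_subset_iff.mpr fun i => hv i i.2))
    _ ≤ Fintype.card κ := finrank_range_le_card b

def IsDeriv.toDerivation {F : Type*} [CommRing F] {D : F → F} (hD : IsDeriv D) :
    Derivation ℤ F F :=
  Derivation.mk' (AddMonoidHom.mk' D hD.1).toIntLinearMap fun a b => hD.2 a b

@[simp]
lemma IsDeriv.toDerivation_apply {F : Type*} [CommRing F] {D : F → F} (hD : IsDeriv D) (a : F) :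
    hD.toDerivation a = D a :=
  rfl

lemma Derivation.leibniz_div_pow {F : Type*} [Field F] (D : Derivation ℤ F F) (a : F) {b : F}
    (hb : b ≠ 0) (n : ℕ) : D (a / b ^ n) = (b * D a - n * a * D b) / b ^ (n + 1) := by
  rw [Derivation.leibniz_div, Derivation.leibniz_pow]
  rcases n with _ | n
  · simp [hb]
  · simp only [smul_eq_mul, nsmul_eq_mul, Nat.cast_add, Nat.cast_one, add_tsub_cancel_right]
    field_simp
    ring

lemma card_filter_range_add_le {a m N : ℕ} (h : m < N) :
    ((Finset.range N).filter fun l => a + l ≤ m).card = m + 1 - a := by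
  rw [← Finset.card_range (m + 1 - a)]
  congr 1
  ext l
  simp only [Finset.mem_filter, Finset.mem_range]
  omega

lemma sum_range_tsub_eq_choose_two {m N : ℕ} (h : m < N) :
    ∑ j ∈ Finset.range N, (m + 1 - j) = (m + 2).choose 2 := by
  rw [← Finset.sum_range_add_sum_Ico _ h, Finset.sum_eq_zero (s := Finset.Ico _ _) fun j hj => by
    simp only [Finset.mem_Ico] at hj; omega, add_zero, ← Nat.sum_range_add_choose m 1,
    ← Finset.sum_range_reflect]
  refine Finset.sum_congr rfl fun j hj => ?_
  rw [Nat.choose_one_right]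
  have := Finset.mem_range.mp hj
  omega

lemma card_filter_add_add_le_eq_choose (ν : ℕ) :
    ((Finset.range (ν + 1) ×ˢ Finset.range (ν + 1) ×ˢ Finset.range (ν + 1)).filter
      fun w : ℕ × ℕ × ℕ => w.1 + w.2.1 + w.2.2 ≤ ν).card = (ν + 3).choose 3 := by
  rw [Finset.card_filter, Finset.sum_product]
  calc ∑ i ∈ Finset.range (ν + 1), ∑ p ∈ Finset.range (ν + 1) ×ˢ Finset.range (ν + 1),
        (if i + p.1 + p.2 ≤ ν then 1 else 0)
      = ∑ i ∈ Finset.range (ν + 1), (ν - i + 2).choose 2 := by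
        refine Finset.sum_congr rfl fun i hi => ?_
        have hiν := Finset.mem_range.mp hi
        rw [Finset.sum_product, ← sum_range_tsub_eq_choose_two (N := ν + 1) (by omega)]
        refine Finset.sum_congr rfl fun j _ => ?_
        rw [← Finset.card_filter, card_filter_range_add_le (a := i + j) (Nat.lt_succ_self ν)]
        omega
    _ = ∑ i ∈ Finset.range (ν + 1), (i + 2).choose 2 := by
        simpa using Finset.sum_range_reflect (fun i => (i + 2).choose 2) (ν + 1)
    _ = (ν + 3).choose 3 := Nat.sum_range_add_choose ν 2

lemma lt_choose_three {dx dy ν : ℕ} (hν : ν = 6 * (dx + 1) * (dy + 1)) :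
    (ν + (ν + 1) * dx + 1) * ((ν + 1) * dy + 1) < (ν + 3).choose 3 := by
  have h6 : 6 * (ν + 3).choose 3 = (ν + 1) * ((ν + 2) * (ν + 3)) := by
    simpa [Nat.descFactorial, Nat.factorial] using
      (Nat.descFactorial_eq_factorial_mul_choose (ν + 3) 3).symm
  have key : 6 * (dx + 1) * ((ν + 1) * dy + 1) + 6 * (dx + 1) * ν = ν * (ν + 1) := by
    subst hν; ring
  have hlt : 6 * (dx + 1) * ((ν + 1) * dy + 1) < (ν + 2) * (ν + 3) := by nlinarith
  have : 6 * ((ν + (ν + 1) * dx + 1) * ((ν + 1) * dy + 1)) < 6 * (ν + 3).choose 3 := by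
    rw [h6]
    calc 6 * ((ν + (ν + 1) * dx + 1) * ((ν + 1) * dy + 1))
        = (ν + 1) * (6 * (dx + 1) * ((ν + 1) * dy + 1)) := by ring
      _ < (ν + 1) * ((ν + 2) * (ν + 3)) := Nat.mul_lt_mul_of_pos_left hlt ν.succ_pos
  omega

section

variable {k : Type*} [Field k]

lemma degX_le_iff {A : k[X][X]} {d : ℕ} : degX A ≤ d ↔ ∀ i, (A.coeff i).natDegree ≤ d := by
  refine Finset.sup_le_iff.trans ⟨fun h i => ?_, fun h i _ => h i⟩
  by_cases hi : i ∈ A.support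
  · exact h i hi
  · simp [notMem_support_iff.mp hi]

lemma coeff_derivX (A : k[X][X]) (n : ℕ) : (derivX A).coeff n = derivative (A.coeff n) := by
  simp only [derivX, Polynomial.sum, finsetSum_coeff, coeff_C_mul, coeff_X_pow, mul_ite,
    mul_one, mul_zero, Finset.sum_ite_eq, mem_support_iff]
  split <;> simp_all

lemma toF_ne_zero {A : k[X][X]} (hA : A ≠ 0) : toF A ≠ 0 := by
  simpa [toF, Polynomial.map_eq_zero_iff (IsFractionRing.injective k[X] (RatFunc k))] using hA

lemma algebraMap_eq_toF_C_C (c : k) :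
    algebraMap k (RatFunc (RatFunc k)) c = toF (C (C c)) := by
  simp [toF, IsScalarTower.algebraMap_apply k (RatFunc k)[X] (RatFunc (RatFunc k))]

lemma toF_derivative_of_kyToF {D : RatFunc (RatFunc k) → RatFunc (RatFunc k)}
    (hD : ∀ A, D (kyToF A) = kyToF (derivative A)) (A : k[X][X]) :
    D (toF A) = toF (derivative A) := by
  simpa [kyToF, toKy, toF, derivative_map] using hD (toKy A)

def BidegLE (a b : ℕ) (A : k[X][X]) : Prop :=
  degX A ≤ a ∧ A.natDegree ≤ b

namespace BidegLE

variable {a b c d : ℕ} {A B : k[X][X]}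

lemma mono (h : BidegLE a b A) {a' b' : ℕ} (ha : a ≤ a') (hb : b ≤ b') : BidegLE a' b' A :=
  ⟨h.1.trans ha, h.2.trans hb⟩

lemma mul (hA : BidegLE a b A) (hB : BidegLE c d B) : BidegLE (a + c) (b + d) (A * B) := by
  refine ⟨degX_le_iff.mpr fun n => ?_, natDegree_mul_le.trans (add_le_add hA.2 hB.2)⟩
  rw [coeff_mul]
  exact natDegree_sum_le_of_forall_le _ _ fun p _ => natDegree_mul_le.trans
    (add_le_add (degX_le_iff.mp hA.1 p.1) (degX_le_iff.mp hB.1 p.2))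

lemma sub (hA : BidegLE a b A) (hB : BidegLE a b B) : BidegLE a b (A - B) := by
  refine ⟨degX_le_iff.mpr fun n => ?_, (natDegree_sub_le _ _).trans (max_le hA.2 hB.2)⟩
  rw [coeff_sub]
  exact (natDegree_sub_le _ _).trans
    (max_le (degX_le_iff.mp hA.1 n) (degX_le_iff.mp hB.1 n))

lemma derivX (hA : BidegLE a b A) : BidegLE a b (derivX A) := by
  refine ⟨degX_le_iff.mpr fun n => ?_, natDegree_le_iff_coeff_eq_zero.mpr fun m hm => ?_⟩
  · rw [coeff_derivX]
    exact (natDegree_derivative_le _).trans ((Nat.sub_le _ _).trans (degX_le_iff.mp hA.1 n))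
  · rw [coeff_derivX, coeff_eq_zero_of_natDegree_lt (hA.2.trans_lt hm), map_zero]

lemma derivative (hA : BidegLE a b A) : BidegLE a b (derivative A) := by
  refine ⟨degX_le_iff.mpr fun n => ?_,
    (natDegree_derivative_le A).trans ((Nat.sub_le _ _).trans hA.2)⟩
  rw [coeff_derivative]
  refine natDegree_mul_le.trans ?_
  rw [← Nat.cast_succ, natDegree_natCast, add_zero]
  exact degX_le_iff.mp hA.1 (n + 1)

end BidegLE

lemma bidegLE_C_C (c : k) : BidegLE 0 0 (C (C c)) := by
  refine ⟨degX_le_iff.mpr fun n => ?_, (natDegree_C _).le⟩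
  rw [coeff_C]
  split <;> simp

lemma bidegLE_natCast (n : ℕ) : BidegLE 0 0 (n : k[X][X]) := by
  simpa using bidegLE_C_C (n : k)

lemma bidegLE_C_X : BidegLE 1 0 (C X : k[X][X]) := by
  refine ⟨degX_le_iff.mpr fun n => ?_, (natDegree_C _).le⟩
  rw [coeff_C]
  split <;> simp

lemma BidegLE.pow {a b : ℕ} {A : k[X][X]} (hA : BidegLE a b A) (n : ℕ) :
    BidegLE (n * a) (n * b) (A ^ n) := by
  induction n with
  | zero => simpa using bidegLE_natCast (k := k) 1
  | succ n ih => simpa [pow_succ, add_mul] using ih.mul hA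

def monomialsDiv (a b : ℕ) (q : RatFunc (RatFunc k)) :
    Fin (a + 1) × Fin (b + 1) → RatFunc (RatFunc k) :=
  fun p => toF (C (X ^ (p.1 : ℕ)) * X ^ (p.2 : ℕ)) / q

lemma BidegLE.div_mem_span {a b : ℕ} {A : k[X][X]} (hA : BidegLE a b A)
    (q : RatFunc (RatFunc k)) :
    toF A / q ∈ Submodule.span k (Set.range (monomialsDiv a b q)) := by
  have hsum : A = ∑ j ∈ Finset.range (b + 1), ∑ i ∈ Finset.range (a + 1),
      C (C ((A.coeff j).coeff i)) * (C (X ^ i) * X ^ j) := by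
    conv_lhs => rw [A.as_sum_range' (b + 1) (Nat.lt_succ_of_le hA.2)]
    refine Finset.sum_congr rfl fun j _ => ?_
    rw [← C_mul_X_pow_eq_monomial]
    conv_lhs => rw [(A.coeff j).as_sum_range' (a + 1) (Nat.lt_succ_of_le (degX_le_iff.mp hA.1 j))]
    rw [map_sum, Finset.sum_mul]
    refine Finset.sum_congr rfl fun i _ => ?_
    rw [← C_mul_X_pow_eq_monomial, map_mul]
    ring
  rw [hsum, map_sum, Finset.sum_div]
  refine Submodule.sum_mem _ fun j hj => ?_
  rw [map_sum, Finset.sum_div]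
  refine Submodule.sum_mem _ fun i hi => ?_
  rw [map_mul, ← algebraMap_eq_toF_C_C, mul_div_assoc, ← Algebra.smul_def]
  exact Submodule.smul_mem _ _ (Submodule.subset_span
    ⟨(⟨i, Finset.mem_range.mp hi⟩, ⟨j, Finset.mem_range.mp hj⟩), rfl⟩)

def IsBidegQuot (Q : k[X][X]) (dx dy n : ℕ) (r : RatFunc (RatFunc k)) : Prop :=
  ∃ A, BidegLE (n * dx) (n * dy) A ∧ r = toF A / toF Q ^ n

namespace IsBidegQuot

variable {Q : k[X][X]} {dx dy n : ℕ} {r : RatFunc (RatFunc k)}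

lemma deriv (hQ : BidegLE dx dy Q) (hQ0 : toF Q ≠ 0)
    {D : RatFunc (RatFunc k) → RatFunc (RatFunc k)} (hD : IsDeriv D)
    {d : k[X][X] → k[X][X]} (hDd : ∀ A, D (toF A) = toF (d A))
    (hd : ∀ {a b A}, BidegLE a b A → BidegLE a b (d A)) (hr : IsBidegQuot Q dx dy n r) :
    IsBidegQuot Q dx dy (n + 1) (D r) := by
  obtain ⟨A, hA, rfl⟩ := hr
  refine ⟨Q * d A - n * A * d Q, BidegLE.sub ?_ ?_, ?_⟩
  · simpa [add_mul, add_comm] using hQ.mul (hd hA)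
  · simpa [add_mul] using ((bidegLE_natCast n).mul hA).mul (hd hQ)
  · rw [← hD.toDerivation_apply, Derivation.leibniz_div_pow _ _ hQ0]
    simp [hDd]

lemma of_le (hQ : BidegLE dx dy Q) (hQ0 : toF Q ≠ 0) (hr : IsBidegQuot Q dx dy n r) {N : ℕ}
    (h : n ≤ N) : IsBidegQuot Q dx dy N r := by
  obtain ⟨A, hA, rfl⟩ := hr
  obtain ⟨m, rfl⟩ := Nat.exists_eq_add_of_le h
  refine ⟨A * Q ^ m, (hA.mul (hQ.pow m)).mono (by rw [add_mul]) (by rw [add_mul]), ?_⟩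
  rw [map_mul, map_pow, pow_add]
  field_simp

lemma iterate_deriv (hQ : BidegLE dx dy Q) (hQ0 : toF Q ≠ 0)
    {D : RatFunc (RatFunc k) → RatFunc (RatFunc k)} (hD : IsDeriv D)
    {d : k[X][X] → k[X][X]} (hDd : ∀ A, D (toF A) = toF (d A))
    (hd : ∀ {a b A}, BidegLE a b A → BidegLE a b (d A)) (hr : IsBidegQuot Q dx dy n r) (j : ℕ) :
    IsBidegQuot Q dx dy (n + j) (D^[j] r) := by
  induction j with
  | zero => simpa using hr
  | succ j ih =>
    rw [Function.iterate_succ_apply', ← add_assoc]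
    exact ih.deriv hQ hQ0 hD hDd hd

lemma X_pow_mul_mem_span (hr : IsBidegQuot Q dx dy n r) {i a : ℕ} (hi : i ≤ a) :
    toF (C X) ^ i * r ∈
      Submodule.span k (Set.range (monomialsDiv (a + n * dx) (n * dy) (toF Q ^ n))) := by
  obtain ⟨A, hA, rfl⟩ := hr
  rw [mul_div_assoc', ← map_pow toF (C X) i, ← map_mul]
  exact (((bidegLE_C_X.pow i).mul hA).mono (by omega) (by omega)).div_mem_span _

end IsBidegQuot

end

theorem stmt_17_general {k : Type*} [Field k]
    (P Q : Polynomial (Polynomial k))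
    (hQ : Q ≠ 0)
    (dx dy : ℕ)
    (hPdx : degX P ≤ dx) (hQdx : degX Q ≤ dx)
    (hPdy : P.natDegree ≤ dy) (hQdy : Q.natDegree ≤ dy)
    (Dy : RatFunc (RatFunc k) → RatFunc (RatFunc k)) (hDy : IsDeriv Dy)
    (hDyval : ∀ A : Polynomial (RatFunc k), Dy (kyToF A) = kyToF (Polynomial.derivative A))
    (Dx : RatFunc (RatFunc k) → RatFunc (RatFunc k)) (hDx : IsDeriv Dx)
    (hDxval : ∀ A : Polynomial (Polynomial k), Dx (toF A) = toF (derivX A))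
    (ν : ℕ) (hν : ν = 6 * (dx + 1) * (dy + 1))
    (S : Finset (ℕ × ℕ × ℕ))
    (hS : S = (Finset.range (ν + 1) ×ˢ Finset.range (ν + 1) ×ˢ
      Finset.range (ν + 1)).filter fun w => w.1 + w.2.1 + w.2.2 ≤ ν) :
    ∃ c : ℕ × ℕ × ℕ → k,
      (∃ w ∈ S, c w ≠ 0) ∧
      ∑ w ∈ S, toF (Polynomial.C (Polynomial.C (c w))) *
        (toF (Polynomial.C Polynomial.X) ^ w.1 *
          Dx^[w.2.1] (Dy^[w.2.2] (toF P / toF Q))) = 0 := by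
  have hQb : BidegLE dx dy Q := ⟨hQdx, hQdy⟩
  have hQ0 := toF_ne_zero hQ
  have hf : IsBidegQuot Q dx dy 1 (toF P / toF Q) := ⟨P, by simpa using ⟨hPdx, hPdy⟩, by simp⟩
  have hmem : ∀ w ∈ S, toF (C X) ^ w.1 * Dx^[w.2.1] (Dy^[w.2.2] (toF P / toF Q)) ∈
      Submodule.span k (Set.range
        (monomialsDiv (ν + (ν + 1) * dx) ((ν + 1) * dy) (toF Q ^ (ν + 1)))) := by
    intro w hw
    have hsum := (Finset.mem_filter.mp (hS ▸ hw)).2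
    exact (((hf.iterate_deriv hQb hQ0 hDy (toF_derivative_of_kyToF hDyval) BidegLE.derivative
      w.2.2).iterate_deriv hQb hQ0 hDx hDxval BidegLE.derivX w.2.1).of_le hQb hQ0
      (by omega)).X_pow_mul_mem_span (by omega)
  obtain ⟨c, hc, w, hw, hcw⟩ := exists_nontrivial_relation_of_mem_span hmem (by
    simpa [hS, card_filter_add_add_le_eq_choose] using lt_choose_three hν)
  refine ⟨c, ⟨w, hw, hcw⟩, ?_⟩
  simpa [Algebra.smul_def, algebraMap_eq_toF_C_C] using hc

/-- Lipshitz's filtration. For a nonzero `f = P/Q ∈ k(x,y)` with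
`bideg(P), bideg(Q) ≤ (d_x, d_y)` and `ν = 6·(d_x+1)·(d_y+1)`, there is a family
`(c_{i,j,ℓ})` of elements of `k`, indexed by the triples with `i+j+ℓ ≤ ν` and not all zero,
such that `∑ c_{i,j,ℓ}·x^i·D_x^j(D_y^ℓ(f)) = 0`. -/
theorem stmt_17 {k : Type*} [Field k] [CharZero k]
    (P Q : Polynomial (Polynomial k))
    (hP : P ≠ 0) (hQ : Q ≠ 0)
    (dx dy : ℕ)
    (hPdx : degX P ≤ dx) (hQdx : degX Q ≤ dx)
    (hPdy : P.natDegree ≤ dy) (hQdy : Q.natDegree ≤ dy)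
    (Dy : RatFunc (RatFunc k) → RatFunc (RatFunc k)) (hDy : IsDeriv Dy)
    (hDyval : ∀ A : Polynomial (RatFunc k), Dy (kyToF A) = kyToF (Polynomial.derivative A))
    (Dx : RatFunc (RatFunc k) → RatFunc (RatFunc k)) (hDx : IsDeriv Dx)
    (hDxval : ∀ A : Polynomial (Polynomial k), Dx (toF A) = toF (derivX A))
    (ν : ℕ) (hν : ν = 6 * (dx + 1) * (dy + 1))
    (S : Finset (ℕ × ℕ × ℕ))
    (hS : S = (Finset.range (ν + 1) ×ˢ Finset.range (ν + 1) ×ˢ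
      Finset.range (ν + 1)).filter fun w => w.1 + w.2.1 + w.2.2 ≤ ν) :
    ∃ c : ℕ × ℕ × ℕ → k,
      (∃ w ∈ S, c w ≠ 0) ∧
      ∑ w ∈ S, toF (Polynomial.C (Polynomial.C (c w))) *
        (toF (Polynomial.C Polynomial.X) ^ w.1 *
          Dx^[w.2.1] (Dy^[w.2.2] (toF P / toF Q))) = 0 :=
  stmt_17_general P Q hQ dx dy hPdx hQdx hPdy hQdy Dy hDy hDyval Dx hDx hDxval ν hν S hS
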